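/- Let X, Y, Z be metric spaces with d_GH(X,Z) + d_GH(Z,Y) = d_GH(X,Y), d_GH(X,Z) > 0 and d_GH(Z,Y) > 0. Fix z₀ ∈ Z and a positive real δ ≤ min{2·d_GH(X,Z), 2·d_GH(Z,Y)}, and let Z* be Z with an extra point z* attached as above (d(z*,z) = δ for z in the closed δ-ball around z₀, d(z*,z) = d(z₀,z) otherwise). Then d_GH(X,Z*) + d_GH(Z*,Y) = d_GH(X,Y); i.e., Z* also lies on the metric segment [X,Y]. -/

import Mathlib

open scoped ENNReal

/-- A correspondence between `X` and `Y`: a relation whose projections are surjective. -/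
def IsCorr {X Y : Type*} (R : Set (X × Y)) : Prop :=
  (∀ x : X, ∃ y : Y, (x, y) ∈ R) ∧ (∀ y : Y, ∃ x : X, (x, y) ∈ R)

/-- The distortion of a relation: `sup |d(x,x') - d(y,y')|` over pairs in `R`. -/
noncomputable def corrDis {X Y : Type*} [MetricSpace X] [MetricSpace Y]
    (R : Set (X × Y)) : ℝ≥0∞ :=
  ⨆ p ∈ R, ⨆ q ∈ R, edist (dist p.1 q.1) (dist p.2 q.2)

/-- The Gromov–Hausdorff distance: half the infimal distortion of correspondences. -/
noncomputable def ghDist (X Y : Type*) [MetricSpace X] [MetricSpace Y] : ℝ≥0∞ :=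
  (⨅ (R : Set (X × Y)) (_ : IsCorr R), corrDis R) / 2

/-- The distance on `Z* = Z ∪ {z*}` (`z* = none`): `δ` on the closed `δ`-ball around `z₀`,
`dist z₀ z` outside it, and the original metric on `Z`. -/
noncomputable def dStar {Z : Type*} [MetricSpace Z] (z₀ : Z) (δ : ℝ) :
    Option Z → Option Z → ℝ
  | some z, some z' => dist z z'
  | some z, none => if dist z₀ z ≤ δ then δ else dist z₀ z
  | none, some z => if dist z₀ z ≤ δ then δ else dist z₀ z
  | none, none => 0

/-! `Z*` maps onto `Z` by collapsing `z*` to `z₀`, and pulling a correspondence `R` between `X`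
and `Z` back along this map does not increase its distortion: a distance `d(z*, z) = δ ≠ d(z₀, z)`
changes `|d(x,x') - d(z*,z)|` only to a value `≤ δ ≤ dis R`, because `δ ≤ 2 d_GH(X,Z)`. Hence
`d_GH(X,Z*) ≤ d_GH(X,Z)` and likewise for `Y`, and the triangle inequality for `d_GH` through `Z*`
turns these two inequalities into the equality. -/

section Correspondence

variable {X Y Z : Type*}

lemma IsCorr.swap {R : Set (X × Y)} (hR : IsCorr R) : IsCorr (Prod.swap ⁻¹' R) :=
  ⟨hR.2, hR.1⟩

lemma IsCorr.comp {R : Set (X × Z)} {S : Set (Z × Y)} (hR : IsCorr R) (hS : IsCorr S) :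
    IsCorr {p : X × Y | ∃ z, (p.1, z) ∈ R ∧ (z, p.2) ∈ S} := by
  constructor
  · intro x
    obtain ⟨z, hz⟩ := hR.1 x
    obtain ⟨y, hy⟩ := hS.1 z
    exact ⟨y, z, hz, hy⟩
  · intro y
    obtain ⟨z, hz⟩ := hS.2 y
    obtain ⟨x, hx⟩ := hR.2 z
    exact ⟨x, z, hx, hz⟩

end Correspondence

section GromovHausdorff

variable {X Y Z W : Type*} [MetricSpace X] [MetricSpace Y] [MetricSpace Z] [MetricSpace W]

lemma le_corrDis {R : Set (X × Y)} {p q : X × Y} (hp : p ∈ R) (hq : q ∈ R) :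
    edist (dist p.1 q.1) (dist p.2 q.2) ≤ corrDis R :=
  le_iSup₂_of_le p hp (le_iSup₂_of_le q hq le_rfl)

lemma corrDis_le {R : Set (X × Y)} {c : ℝ≥0∞}
    (h : ∀ p ∈ R, ∀ q ∈ R, edist (dist p.1 q.1) (dist p.2 q.2) ≤ c) : corrDis R ≤ c :=
  iSup₂_le fun p hp => iSup₂_le fun q hq => h p hp q hq

lemma two_mul_ghDist_le_corrDis {R : Set (X × Y)} (hR : IsCorr R) :
    2 * ghDist X Y ≤ corrDis R := by
  rw [ghDist, ENNReal.mul_div_cancel two_ne_zero ENNReal.ofNat_ne_top]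
  exact iInf₂_le R hR

lemma corrDis_preimage_swap (R : Set (X × Y)) : corrDis (Prod.swap ⁻¹' R) = corrDis R :=
  le_antisymm
    (corrDis_le fun _ hp _ hq =>
      (edist_comm _ _).trans_le (le_corrDis (p := Prod.swap _) (q := Prod.swap _) hp hq))
    (corrDis_le fun _ hp _ hq => (edist_comm _ _).trans_le
      (le_corrDis (R := Prod.swap ⁻¹' R) (p := Prod.swap _) (q := Prod.swap _) hp hq))

lemma ghDist_le_swap : ghDist X Y ≤ ghDist Y X :=
  ENNReal.div_le_div_right (le_iInf₂ fun R hR =>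
    (iInf₂_le _ hR.swap).trans_eq (corrDis_preimage_swap R)) 2

lemma ghDist_comm : ghDist X Y = ghDist Y X :=
  le_antisymm ghDist_le_swap ghDist_le_swap

lemma corrDis_comp_le (R : Set (X × Z)) (S : Set (Z × Y)) :
    corrDis {p : X × Y | ∃ z, (p.1, z) ∈ R ∧ (z, p.2) ∈ S} ≤ corrDis R + corrDis S := by
  refine corrDis_le fun p ⟨z, hpR, hpS⟩ q ⟨z', hqR, hqS⟩ => ?_
  calc edist (dist p.1 q.1) (dist p.2 q.2)
      ≤ edist (dist p.1 q.1) (dist z z') + edist (dist z z') (dist p.2 q.2) :=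
        edist_triangle _ _ _
    _ ≤ corrDis R + corrDis S :=
        add_le_add (le_corrDis (p := (p.1, z)) (q := (q.1, z')) hpR hqR)
          (le_corrDis (p := (z, p.2)) (q := (z', q.2)) hpS hqS)

lemma ghDist_triangle : ghDist X Y ≤ ghDist X Z + ghDist Z Y := by
  rw [ghDist, ghDist, ghDist, ENNReal.div_add_div_same]
  refine ENNReal.div_le_div_right ?_ 2
  simp only [ENNReal.iInf_add, ENNReal.add_iInf]
  exact le_iInf₂ fun S hS => le_iInf₂ fun R hR =>
    (iInf₂_le _ (hR.comp hS)).trans (corrDis_comp_le R S)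

lemma ghDist_le_of_surjective {f : W → Z} (hf : Function.Surjective f) {c : ℝ≥0∞}
    (hfc : ∀ s : ℝ, 0 ≤ s → ∀ a b : W,
      edist s (dist a b) ≤ max c (edist s (dist (f a) (f b))))
    (hc : c ≤ 2 * ghDist X Z) :
    ghDist X W ≤ ghDist X Z := by
  refine ENNReal.div_le_div_right (le_iInf₂ fun R hR => ?_) 2
  have hR' : IsCorr {p : X × W | (p.1, f p.2) ∈ R} := by
    refine ⟨fun x => ?_, fun w => hR.2 (f w)⟩
    obtain ⟨z, hz⟩ := hR.1 x
    obtain ⟨w, rfl⟩ := hf z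
    exact ⟨w, hz⟩
  refine (iInf₂_le _ hR').trans (corrDis_le fun p hp q hq => ?_)
  exact (hfc _ dist_nonneg p.2 q.2).trans <|
    max_le (hc.trans (two_mul_ghDist_le_corrDis hR))
      (le_corrDis (p := (p.1, f p.2)) (q := (q.1, f q.2)) hp hq)

end GromovHausdorff

lemma edist_le_max_of_le {s b δ : ℝ} (hs : 0 ≤ s) (hb : b ≤ δ) :
    edist s δ ≤ max (ENNReal.ofReal δ) (edist s b) := by
  rw [edist_dist, edist_dist, Real.dist_eq, Real.dist_eq, ← ENNReal.ofReal_max]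
  refine ENNReal.ofReal_le_ofReal ?_
  rcases le_total s δ with h | h
  · exact le_max_of_le_left (by rw [abs_le]; constructor <;> linarith)
  · exact le_max_of_le_right (by rw [abs_of_nonneg (by linarith)]; linarith [le_abs_self (s - b)])

lemma edist_dStar_le {Z : Type*} [MetricSpace Z] (z₀ : Z) (δ : ℝ) {s : ℝ} (hs : 0 ≤ s)
    (a b : Option Z) :
    edist s (dStar z₀ δ a b) ≤ max (ENNReal.ofReal δ) (edist s (dist (a.getD z₀) (b.getD z₀))) := by
  have hstar : ∀ z : Z, edist s (if dist z₀ z ≤ δ then δ else dist z₀ z) ≤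
      max (ENNReal.ofReal δ) (edist s (dist z₀ z)) := fun z => by
    split_ifs with h
    · exact edist_le_max_of_le hs h
    · exact le_max_right _ _
  rcases a with _ | z <;> rcases b with _ | z'
  · simp [dStar]
  · exact hstar z'
  · simpa [dStar, dist_comm z₀ z] using hstar z
  · exact le_max_right _ _

lemma ghDist_option_le_of_dist_eq_dStar {X Z : Type*} [MetricSpace X] [MetricSpace Z] {z₀ : Z} {δ : ℝ}
    [MetricSpace (Option Z)] (hm : ∀ a b : Option Z, dist a b = dStar z₀ δ a b)
    (hδ : ENNReal.ofReal δ ≤ 2 * ghDist X Z) :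
    ghDist X (Option Z) ≤ ghDist X Z :=
  ghDist_le_of_surjective (f := fun a => a.getD z₀) (fun z => ⟨some z, rfl⟩)
    (fun _ hs a b => hm a b ▸ edist_dStar_le z₀ δ hs a b) hδ

theorem stmt3_general {X Y Z : Type*} [MetricSpace X] [MetricSpace Y] [MetricSpace Z]
    (hseg : ghDist X Z + ghDist Z Y = ghDist X Y)
    (z₀ : Z) (δ : ℝ)
    (hδX : ENNReal.ofReal δ ≤ 2 * ghDist X Z) (hδY : ENNReal.ofReal δ ≤ 2 * ghDist Z Y)
    [MetricSpace (Option Z)] (hm : ∀ a b : Option Z, dist a b = dStar z₀ δ a b) :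
    ghDist X (Option Z) + ghDist (Option Z) Y = ghDist X Y := by
  have hX : ghDist X (Option Z) ≤ ghDist X Z := ghDist_option_le_of_dist_eq_dStar hm hδX
  have hY : ghDist (Option Z) Y ≤ ghDist Z Y := by
    rw [ghDist_comm, ghDist_comm (X := Z)]
    exact ghDist_option_le_of_dist_eq_dStar hm (ghDist_comm (X := Z) (Y := Y) ▸ hδY)
  exact le_antisymm (hseg ▸ add_le_add hX hY) ghDist_triangle

/-- If `Z` lies strictly inside the metric segment `[X,Y]` and `δ ≤ min{2 d_GH(X,Z), 2 d_GH(Z,Y)}`,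
then `Z* = Z ∪ {z*}` also lies on the segment `[X,Y]`. -/
theorem stmt3 {X Y Z : Type*} [MetricSpace X] [MetricSpace Y] [MetricSpace Z]
    (hseg : ghDist X Z + ghDist Z Y = ghDist X Y)
    (hXZ : 0 < ghDist X Z) (hZY : 0 < ghDist Z Y)
    (z₀ : Z) (δ : ℝ) (hδ : 0 < δ)
    (hδX : ENNReal.ofReal δ ≤ 2 * ghDist X Z) (hδY : ENNReal.ofReal δ ≤ 2 * ghDist Z Y)
    [MetricSpace (Option Z)] (hm : ∀ a b : Option Z, dist a b = dStar z₀ δ a b) :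
    ghDist X (Option Z) + ghDist (Option Z) Y = ghDist X Y :=
  stmt3_general hseg z₀ δ hδX hδY hm
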